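/- arXiv:1903.05058 — 2 statements merged into one kernel-verified Lean document; each statement's English description precedes it below -/
import Mathlib

section
/- Let ω be a random variable with ω ≥ −1 a.s., E[ω] = 0, and tail bounds C' x^{−γ} ≤ P[ω > x] ≤ C'' x^{−γ} for all large x, with γ ∈ (1,2). For β ∈ (0,1) define the tilted law P̃(A) = E[(1+βω) 1_{ω ∈ A}]. Then there exists a constant C > 0 such that for all x ≥ β^{−1}, (1/C) β x^{−γ+1} ≤ P̃[ω ≥ x] ≤ C β x^{−γ+1}. -/
/-!
On `{ω ≥ x}` with `βx ≥ 1` we have `βω ≤ 1 + βω ≤ 2βω`, so `P̃[ω ≥ x]` is comparable to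
`β E[ω; ω ≥ x]`, and it suffices to show that the truncated first moment `E[ω; ω ≥ x]` is of order
`x^(1-γ)` for `x ≥ 1`. From below it is at least `x P[ω > x]`. From above, the layer-cake formula
bounds it by `x P[ω > x/2] + ∫_x^∞ P[ω > t] dt`, and the integral converges because `γ > 1`.
-/

open MeasureTheory Set

theorem setLIntegral_Ioi_ofReal_mul_rpow_neg {γ K x : ℝ} (hγ : 1 < γ) (hK : 0 ≤ K) (hx : 0 < x) :
    ∫⁻ t in Ioi x, ENNReal.ofReal (K * t ^ (-γ)) =
      ENNReal.ofReal (1 / (γ - 1) * K * x ^ (-γ + 1)) := by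
  have hint : IntegrableOn (fun t : ℝ => K * t ^ (-γ)) (Ioi x) :=
    (integrableOn_Ioi_rpow_of_lt (by linarith) hx).const_mul K
  have hnonneg : 0 ≤ᵐ[volume.restrict (Ioi x)] fun t : ℝ => K * t ^ (-γ) :=
    ae_restrict_of_forall_mem measurableSet_Ioi fun t (ht : x < t) =>
      mul_nonneg hK (Real.rpow_nonneg (hx.trans ht).le _)
  rw [← ofReal_integral_eq_lintegral_ofReal hint hnonneg, integral_const_mul,
    integral_Ioi_rpow_of_lt (by linarith) hx]
  have : -γ + 1 ≠ 0 := by linarith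
  have : γ - 1 ≠ 0 := by linarith
  congr 1
  field_simp
  ring

section TailEstimates

variable {Ω : Type*} [MeasurableSpace Ω] {μ : Measure Ω} {W : Ω → ℝ} {γ : ℝ}

theorem measure_lt_le_ofReal_of_tail_le [IsProbabilityMeasure μ] (hγ : 0 ≤ γ) {C x₀ : ℝ}
    (hx₀ : 0 < x₀) (h : ∀ t, x₀ ≤ t → μ.real {a | t < W a} ≤ C * t ^ (-γ)) {t : ℝ}
    (ht : 0 < t) : μ {a | t < W a} ≤ ENNReal.ofReal (max C (x₀ ^ γ) * t ^ (-γ)) := by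
  rw [← ofReal_measureReal]
  refine ENNReal.ofReal_le_ofReal ?_
  rcases le_or_gt x₀ t with hxt | htx
  · exact (h t hxt).trans (by gcongr; exact le_max_left _ _)
  · calc μ.real {a | t < W a} ≤ 1 := measureReal_le_one
      _ = x₀ ^ γ * x₀ ^ (-γ) := by rw [Real.rpow_neg hx₀.le, mul_inv_cancel₀ (by positivity)]
      _ ≤ max C (x₀ ^ γ) * t ^ (-γ) :=
        mul_le_mul (le_max_right _ _) (Real.rpow_le_rpow_of_nonpos ht htx.le (by linarith))
          (by positivity) ((Real.rpow_pos_of_pos hx₀ γ).le.trans (le_max_right _ _))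

theorem le_measureReal_lt_of_tail_ge [IsFiniteMeasure μ] (hγ : 0 ≤ γ) {C x₀ : ℝ} (hC : 0 ≤ C)
    (hx₀ : 1 ≤ x₀) (h : ∀ t, x₀ ≤ t → C * t ^ (-γ) ≤ μ.real {a | t < W a}) {t : ℝ}
    (ht : 1 ≤ t) : C * x₀ ^ (-γ) * t ^ (-γ) ≤ μ.real {a | t < W a} := by
  rcases le_or_gt x₀ t with hxt | htx
  · calc C * x₀ ^ (-γ) * t ^ (-γ) ≤ C * 1 * t ^ (-γ) := by
          gcongr; exact Real.rpow_le_one_of_one_le_of_nonpos hx₀ (by linarith)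
      _ ≤ μ.real {a | t < W a} := by simpa using h t hxt
  · calc C * x₀ ^ (-γ) * t ^ (-γ) ≤ C * x₀ ^ (-γ) * 1 := by
          gcongr; exact Real.rpow_le_one_of_one_le_of_nonpos ht (by linarith)
      _ ≤ μ.real {a | x₀ < W a} := by simpa using h x₀ le_rfl
      _ ≤ μ.real {a | t < W a} := measureReal_mono fun a ha => htx.trans ha

theorem setLIntegral_ofReal_le_of_tail_le (hW : Measurable W) (hγ : 1 < γ) {K : ℝ} (hK : 0 ≤ K)
    (htail : ∀ t, 0 < t → μ {a | t < W a} ≤ ENNReal.ofReal (K * t ^ (-γ))) {x : ℝ}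
    (hx : 0 < x) :
    ∫⁻ a in {a | x ≤ W a}, ENNReal.ofReal (W a) ∂μ ≤
      ENNReal.ofReal ((2 ^ γ + 1 / (γ - 1)) * K * x ^ (-γ + 1)) := by
  set S := {a | x ≤ W a}
  have hS : MeasurableSet S := measurableSet_le measurable_const hW
  have hW_nonneg : 0 ≤ᵐ[μ.restrict S] W :=
    ae_restrict_of_forall_mem hS fun a ha => hx.le.trans ha
  have hnear : ∫⁻ t in Ioc 0 x, μ.restrict S {a | t < W a} ≤
      ENNReal.ofReal (2 ^ γ * K * x ^ (-γ + 1)) := by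
    have hS_le : ∀ t, μ.restrict S {a | t < W a} ≤ μ {a | x / 2 < W a} := fun t =>
      calc μ.restrict S {a | t < W a} ≤ μ S :=
          (measure_mono (subset_univ _)).trans_eq (Measure.restrict_apply_univ S)
        _ ≤ μ {a | x / 2 < W a} :=
          measure_mono fun a (ha : x ≤ W a) => show x / 2 < W a by linarith
    calc ∫⁻ t in Ioc 0 x, μ.restrict S {a | t < W a}
        ≤ ∫⁻ _ in Ioc 0 x, μ {a | x / 2 < W a} := lintegral_mono hS_le
      _ = μ {a | x / 2 < W a} * ENNReal.ofReal x := by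
        rw [setLIntegral_const, Real.volume_Ioc, sub_zero]
      _ ≤ ENNReal.ofReal (K * (x / 2) ^ (-γ)) * ENNReal.ofReal x := by
        gcongr; exact htail _ (by positivity)
      _ = ENNReal.ofReal (2 ^ γ * K * x ^ (-γ + 1)) := by
        rw [← ENNReal.ofReal_mul (by positivity), Real.div_rpow hx.le zero_le_two,
          Real.rpow_neg zero_le_two, Real.rpow_add hx, Real.rpow_one]
        congr 1
        field_simp
  have hfar : ∫⁻ t in Ioi x, μ.restrict S {a | t < W a} ≤
      ENNReal.ofReal (1 / (γ - 1) * K * x ^ (-γ + 1)) :=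
    calc ∫⁻ t in Ioi x, μ.restrict S {a | t < W a}
        ≤ ∫⁻ t in Ioi x, ENNReal.ofReal (K * t ^ (-γ)) :=
          setLIntegral_mono (by fun_prop) fun t ht =>
            (Measure.restrict_apply_le _ _).trans (htail t (hx.trans ht))
      _ = ENNReal.ofReal (1 / (γ - 1) * K * x ^ (-γ + 1)) :=
          setLIntegral_Ioi_ofReal_mul_rpow_neg hγ hK hx
  have hγ' : 0 < γ - 1 := by linarith
  calc ∫⁻ a in S, ENNReal.ofReal (W a) ∂μ
      = (∫⁻ t in Ioc 0 x, μ.restrict S {a | t < W a}) +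
          ∫⁻ t in Ioi x, μ.restrict S {a | t < W a} := by
        rw [lintegral_eq_lintegral_meas_lt _ hW_nonneg hW.aemeasurable,
          ← Ioc_union_Ioi_eq_Ioi hx.le, lintegral_union measurableSet_Ioi Ioc_disjoint_Ioi_same]
    _ ≤ ENNReal.ofReal (2 ^ γ * K * x ^ (-γ + 1)) +
          ENNReal.ofReal (1 / (γ - 1) * K * x ^ (-γ + 1)) := add_le_add hnear hfar
    _ = ENNReal.ofReal ((2 ^ γ + 1 / (γ - 1)) * K * x ^ (-γ + 1)) := by
        rw [← ENNReal.ofReal_add (by positivity) (by positivity)]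
        ring_nf

theorem exists_rpow_bounds_setIntegral_of_tail [IsProbabilityMeasure μ] (hW : Measurable W)
    (hγ : 1 < γ) {C' C'' x₀ : ℝ} (hC' : 0 < C')
    (htail : ∀ x, x₀ ≤ x →
      C' * x ^ (-γ) ≤ μ.real {a | x < W a} ∧ μ.real {a | x < W a} ≤ C'' * x ^ (-γ)) :
    ∃ c D : ℝ, 0 < c ∧ 0 < D ∧ ∀ x, 1 ≤ x →
      IntegrableOn W {a | x ≤ W a} μ ∧
      c * x ^ (-γ + 1) ≤ ∫ a in {a | x ≤ W a}, W a ∂μ ∧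
      ∫ a in {a | x ≤ W a}, W a ∂μ ≤ D * x ^ (-γ + 1) := by
  set x₁ := max 1 x₀
  have hx₁ : 1 ≤ x₁ := le_max_left _ _
  have htail₁ : ∀ t, x₁ ≤ t → _ := fun t ht => htail t ((le_max_right _ _).trans ht)
  set K := max C'' (x₁ ^ γ)
  have hK : 0 < K := lt_max_of_lt_right (by positivity)
  have hγ' : 0 < γ - 1 := by linarith
  refine ⟨C' * x₁ ^ (-γ), (2 ^ γ + 1 / (γ - 1)) * K, by positivity, by positivity,
    fun x hx => ?_⟩
  set S := {a | x ≤ W a}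
  have hx0 : 0 < x := zero_lt_one.trans_le hx
  have hS : MeasurableSet S := measurableSet_le measurable_const hW
  have hW_nonneg : 0 ≤ᵐ[μ.restrict S] W :=
    ae_restrict_of_forall_mem hS fun a ha => hx0.le.trans ha
  have hlint := setLIntegral_ofReal_le_of_tail_le hW hγ hK.le
    (fun t ht => measure_lt_le_ofReal_of_tail_le (by linarith) (by positivity)
      (fun t ht => (htail₁ t ht).2) ht) hx0
  have hint : IntegrableOn W S μ :=
    ⟨hW.aestronglyMeasurable,
      (hasFiniteIntegral_iff_ofReal hW_nonneg).2 (hlint.trans_lt ENNReal.ofReal_lt_top)⟩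
  refine ⟨hint, ?_, ?_⟩
  · calc C' * x₁ ^ (-γ) * x ^ (-γ + 1) = x * (C' * x₁ ^ (-γ) * x ^ (-γ)) := by
          rw [Real.rpow_add hx0, Real.rpow_one]; ring
      _ ≤ x * μ.real {a | x < W a} := by
          gcongr
          exact le_measureReal_lt_of_tail_ge (by linarith) hC'.le hx₁
            (fun t ht => (htail₁ t ht).1) hx
      _ ≤ x * μ.real S :=
          mul_le_mul_of_nonneg_left (measureReal_mono fun a (ha : x < W a) => ha.le) hx0.le
      _ ≤ ∫ a in S, W a ∂μ :=
          setIntegral_ge_of_const_le_real hS (measure_ne_top _ _) (fun a ha => ha) hint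
  · rw [integral_eq_lintegral_of_nonneg_ae hW_nonneg hW.aestronglyMeasurable]
    exact ENNReal.toReal_le_of_le_ofReal (by positivity) hlint

theorem mul_setIntegral_le_setIntegral_one_add_mul [IsFiniteMeasure μ] {s : Set Ω}
    (hW : IntegrableOn W s μ) (β : ℝ) :
    β * ∫ a in s, W a ∂μ ≤ ∫ a in s, (1 + β * W a) ∂μ := by
  rw [← integral_const_mul]
  exact setIntegral_mono (hW.const_mul β) ((integrableOn_const).add (hW.const_mul β))
    fun a => by linarith

theorem setIntegral_one_add_mul_le [IsFiniteMeasure μ] (hW : Measurable W) {β x : ℝ}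
    (hβ : 0 ≤ β) (hβx : 1 ≤ β * x) (hint : IntegrableOn W {a | x ≤ W a} μ) :
    ∫ a in {a | x ≤ W a}, (1 + β * W a) ∂μ ≤ 2 * β * ∫ a in {a | x ≤ W a}, W a ∂μ := by
  rw [← integral_const_mul]
  refine setIntegral_mono_on ((integrableOn_const).add (hint.const_mul β))
    (hint.const_mul _) (measurableSet_le measurable_const hW) fun a (ha : x ≤ W a) => ?_
  nlinarith [mul_le_mul_of_nonneg_left ha hβ]

end TailEstimates

theorem tilted_tail_estimates_general
    {Ω : Type*} [MeasurableSpace Ω] (μ : Measure Ω) [IsProbabilityMeasure μ]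
    (W : Ω → ℝ) (hWmeas : Measurable W)
    (γ C' C'' x₀ : ℝ) (hγ1 : 1 < γ) (hC' : 0 < C')
    (htail : ∀ x : ℝ, x₀ ≤ x →
      C' * x ^ (-γ) ≤ (μ {a | x < W a}).toReal ∧
      (μ {a | x < W a}).toReal ≤ C'' * x ^ (-γ)) :
    ∃ C : ℝ, 0 < C ∧ ∀ β : ℝ, 0 < β → β < 1 → ∀ x : ℝ, β⁻¹ ≤ x →
      (1 / C) * β * x ^ (-γ + 1) ≤ ∫ a in {a | x ≤ W a}, (1 + β * W a) ∂μ ∧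
      ∫ a in {a | x ≤ W a}, (1 + β * W a) ∂μ ≤ C * β * x ^ (-γ + 1) := by
  obtain ⟨c, D, hc, hD, hmoment⟩ := exists_rpow_bounds_setIntegral_of_tail hWmeas hγ1 hC' htail
  refine ⟨max (1 / c) (2 * D), lt_max_of_lt_right (by positivity), fun β hβ hβ1 x hx => ?_⟩
  have hβx : 1 ≤ β * x := by simpa [hβ.ne'] using mul_le_mul_of_nonneg_left hx hβ.le
  have hx1 : 1 ≤ x := ((one_le_inv₀ hβ).2 hβ1.le).trans hx
  have hxγ : 0 < x ^ (-γ + 1) := Real.rpow_pos_of_pos (zero_lt_one.trans_le hx1) _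
  obtain ⟨hint, hlow, hup⟩ := hmoment x hx1
  constructor
  · calc 1 / max (1 / c) (2 * D) * β * x ^ (-γ + 1)
          = β * (1 / max (1 / c) (2 * D) * x ^ (-γ + 1)) := by ring
      _ ≤ β * (c * x ^ (-γ + 1)) := by
          gcongr
          exact (one_div_le (lt_max_of_lt_right (by positivity)) hc).2 (le_max_left _ _)
      _ ≤ β * ∫ a in {a | x ≤ W a}, W a ∂μ := by gcongr
      _ ≤ _ := mul_setIntegral_le_setIntegral_one_add_mul hint β
  · calc _ ≤ 2 * β * ∫ a in {a | x ≤ W a}, W a ∂μ :=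
          setIntegral_one_add_mul_le hWmeas hβ.le hβx hint
      _ ≤ 2 * β * (D * x ^ (-γ + 1)) := by gcongr
      _ = 2 * D * β * x ^ (-γ + 1) := by ring
      _ ≤ _ := by
          gcongr
          exact le_max_right _ _

theorem tilted_tail_estimates
    {Ω : Type*} [MeasurableSpace Ω] (μ : Measure Ω) [IsProbabilityMeasure μ]
    (W : Ω → ℝ) (hWmeas : Measurable W)
    (hWlb : ∀ᵐ a ∂μ, -1 ≤ W a) (hWint : Integrable W μ) (hWmean : ∫ a, W a ∂μ = 0)
    (γ C' C'' x₀ : ℝ) (hγ1 : 1 < γ) (hγ2 : γ < 2) (hC' : 0 < C') (hC'' : 0 < C'')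
    (hx₀ : 0 < x₀)
    (htail : ∀ x : ℝ, x₀ ≤ x →
      C' * x ^ (-γ) ≤ (μ {a | x < W a}).toReal ∧
      (μ {a | x < W a}).toReal ≤ C'' * x ^ (-γ)) :
    ∃ C : ℝ, 0 < C ∧ ∀ β : ℝ, 0 < β → β < 1 → ∀ x : ℝ, β⁻¹ ≤ x →
      (1 / C) * β * x ^ (-γ + 1) ≤ ∫ a in {a | x ≤ W a}, (1 + β * W a) ∂μ ∧
      ∫ a in {a | x ≤ W a}, (1 + β * W a) ∂μ ≤ C * β * x ^ (-γ + 1) :=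
  tilted_tail_estimates_general μ W hWmeas γ C' C'' x₀ hγ1 hC' htail
end

section
/- Let ω = {ω_{n,z}} be IID, ω ≥ −1 a.s., E[ω] = 0, E[|ω|^{1+q}] < ∞ for some q ∈ (0,1). For β ∈ (0,1) define the polymer partition function Z_N^{β,ω} = E_RW[∏_{i=1}^N (1+βω_{i,S_i})] and p_N(β) = (1/N) E[log Z_N^{β,ω}] (assume log Z_N is integrable). Then β ↦ p_N(β) is non-increasing on (0,1). -/
open MeasureTheory ProbabilityTheory Finset

/-- The displacement of a single step of the simple random walk. -/
def srwStep (d : ℕ) (e : Fin d × Bool) : Fin d → ℤ :=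
  fun i => if i = e.1 then (if e.2 then 1 else -1) else 0

/-- Position at time `n` of the nearest-neighbour path on `ℤ^d` started at `0`. -/
def srwPos {d N : ℕ} (σ : Fin N → Fin d × Bool) (n : ℕ) : Fin d → ℤ :=
  ∑ k ∈ Finset.univ.filter (fun k : Fin N => (k : ℕ) < n), srwStep d (σ k)

/-- The normalized partition function of the directed polymer. -/
noncomputable def polymerZ {Ω : Type*} (d : ℕ) (β : ℝ)
    (η : ℕ → (Fin d → ℤ) → Ω → ℝ) (N : ℕ) (a : Ω) : ℝ :=
  (1 / (2 * d) : ℝ) ^ N * ∑ σ : Fin N → Fin d × Bool,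
    ∏ n ∈ Finset.range N, (1 + β * η (n + 1) (srwPos σ (n + 1)) a)

/-!
Give each site `x` its own inverse temperature `f x` and lower it from `β₂` to `β₁` one site `s`
at a time. As a function of `f s` the partition function is affine, `Z = Z₀ + f s * ω_s * A`, where
`Z₀` and `A` do not involve `ω_s`. Hence `log Z` is concave in `f s`, and its increment over
`[β₁, β₂]` is at most `(β₂ - β₁) * ω_s * A / Z₀`, the slope at `f s = 0`. This bound has mean zero
since `ω_s` is centred and independent of `A / Z₀`. Summing over the finitely many sites that paths
can visit gives `E log Z(β₂) ≤ E log Z(β₁)`.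
-/

namespace Polymer

open Function

variable {ι κ : Type*} [Fintype ι]

/-- Paths `σ` of weight `w σ` visit the sites `V σ`; `e` is the environment and `f` a
site-dependent inverse temperature. -/
noncomputable def pathSum (w : ι → ℝ) (V : ι → Finset κ) (f e : κ → ℝ) : ℝ :=
  ∑ σ, w σ * ∏ x ∈ V σ, (1 + f x * e x)

variable {w : ι → ℝ} {V : ι → Finset κ} {f e : κ → ℝ}

lemma one_add_mul_pos {c x : ℝ} (hc : c ∈ Set.Ico 0 1) (hx : -1 ≤ x) : 0 < 1 + c * x := by
  nlinarith [hc.1, hc.2]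

lemma pathSum_pos [Nonempty ι] (hw : ∀ σ, 0 < w σ) (hf : ∀ x, f x ∈ Set.Ico 0 1)
    (he : ∀ x, -1 ≤ e x) : 0 < pathSum w V f e :=
  Finset.sum_pos (fun σ _ => mul_pos (hw σ) <|
    Finset.prod_pos fun x _ => one_add_mul_pos (hf x) (he x)) Finset.univ_nonempty

lemma measurable_pathSum : Measurable (pathSum w V f) := by
  unfold pathSum
  fun_prop

variable [DecidableEq κ]

noncomputable def pathSumThrough (s : κ) (w : ι → ℝ) (V : ι → Finset κ) (f e : κ → ℝ) : ℝ :=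
  pathSum (fun σ => if s ∈ V σ then w σ else 0) (fun σ => (V σ).erase s) f e

/-- The probability that the path visits `s` under the polymer measure of `pathSum` with the
inverse temperature at `s` switched off. It does not depend on `e s`. -/
noncomputable def visitProb (s : κ) (w : ι → ℝ) (V : ι → Finset κ) (f e : κ → ℝ) : ℝ :=
  pathSumThrough s w V f e / pathSum w V (update f s 0) e

lemma pathSum_congr {f' e' : κ → ℝ}
    (h : ∀ x ∈ Finset.univ.biUnion V, f x * e x = f' x * e' x) :
    pathSum w V f e = pathSum w V f' e' :=
  Finset.sum_congr rfl fun σ _ => congrArg _ <| Finset.prod_congr rfl fun x hx => by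
    rw [h x (Finset.mem_biUnion.2 ⟨σ, Finset.mem_univ σ, hx⟩)]

lemma prod_one_add_update_zero_mul (t : Finset κ) (s : κ) :
    ∏ x ∈ t, (1 + update f s 0 x * e x) = ∏ x ∈ t.erase s, (1 + f x * e x) := by
  rw [← Finset.prod_erase t (by simp : 1 + update f s 0 s * e s = 1)]
  exact Finset.prod_congr rfl fun x hx => by rw [update_of_ne (Finset.ne_of_mem_erase hx)]

lemma pathSum_update (s : κ) (c : ℝ) :
    pathSum w V (update f s c) e
      = pathSum w V (update f s 0) e + c * e s * pathSumThrough s w V f e := by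
  simp only [pathSumThrough, pathSum, Finset.mul_sum, ← Finset.sum_add_distrib,
    prod_one_add_update_zero_mul]
  refine Finset.sum_congr rfl fun σ _ => ?_
  have hoff : ∀ x ∈ (V σ).erase s, 1 + update f s c x * e x = 1 + f x * e x :=
    fun x hx => by rw [update_of_ne (Finset.ne_of_mem_erase hx)]
  split_ifs with hs
  · rw [← Finset.mul_prod_erase _ _ hs, update_self, Finset.prod_congr rfl hoff]
    ring
  · rw [Finset.erase_eq_of_notMem hs] at hoff ⊢
    rw [Finset.prod_congr rfl hoff]
    ring

lemma visitProb_mem_Icc (hw : ∀ σ, 0 ≤ w σ) (hf : ∀ x, f x ∈ Set.Ico 0 1) (he : ∀ x, -1 ≤ e x)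
    (s : κ) : visitProb s w V f e ∈ Set.Icc 0 1 := by
  have hweight : ∀ σ, (if s ∈ V σ then w σ else 0) ∈ Set.Icc 0 (w σ) := fun σ => by
    split_ifs <;> simp [hw σ]
  have hprod : ∀ σ, 0 ≤ ∏ x ∈ (V σ).erase s, (1 + f x * e x) := fun σ =>
    Finset.prod_nonneg fun x _ => (one_add_mul_pos (hf x) (he x)).le
  have hthrough : 0 ≤ pathSumThrough s w V f e :=
    Finset.sum_nonneg fun σ _ => mul_nonneg (hweight σ).1 (hprod σ)
  have hle : pathSumThrough s w V f e ≤ pathSum w V (update f s 0) e := by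
    simp only [pathSumThrough, pathSum, prod_one_add_update_zero_mul]
    exact Finset.sum_le_sum fun σ _ => mul_le_mul_of_nonneg_right (hweight σ).2 (hprod σ)
  exact ⟨div_nonneg hthrough (hthrough.trans hle), div_le_one_of_le₀ hle (hthrough.trans hle)⟩

/-- Concavity of `c ↦ log (F + c * y)`: on `[c₁, c₂] ⊆ [0, ∞)` it increases by at most
`c₂ - c₁` times its slope at `0`. -/
lemma log_add_mul_sub_log_add_mul_le {F y c₁ c₂ : ℝ} (hF : 0 < F) (hc₁ : 0 ≤ c₁) (hc : c₁ ≤ c₂)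
    (h₁ : 0 < F + c₁ * y) (h₂ : 0 < F + c₂ * y) :
    Real.log (F + c₂ * y) - Real.log (F + c₁ * y) ≤ (c₂ - c₁) * (y / F) := by
  calc Real.log (F + c₂ * y) - Real.log (F + c₁ * y)
      ≤ (F + c₂ * y) / (F + c₁ * y) - 1 := by
        rw [← Real.log_div h₂.ne' h₁.ne']
        exact Real.log_le_sub_one_of_pos (div_pos h₂ h₁)
    _ = (c₂ - c₁) * y / (F + c₁ * y) := by rw [div_sub_one h₁.ne']; ring
    _ ≤ (c₂ - c₁) * (y / F) := by
        rw [← mul_div_assoc, div_le_div_iff₀ h₁ hF]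
        nlinarith [mul_nonneg (mul_nonneg (sub_nonneg.2 hc) hc₁) (sq_nonneg y)]

lemma log_pathSum_update_sub_le [Nonempty ι] (hw : ∀ σ, 0 < w σ) (hf : ∀ x, f x ∈ Set.Ico 0 1)
    (he : ∀ x, -1 ≤ e x) (s : κ) {c₁ c₂ : ℝ} (hc₁ : 0 ≤ c₁) (hc : c₁ ≤ c₂) (hc₂ : c₂ < 1) :
    Real.log (pathSum w V (update f s c₂) e) - Real.log (pathSum w V (update f s c₁) e)
      ≤ (c₂ - c₁) * (e s * visitProb s w V f e) := by
  have hupdate : ∀ c ∈ Set.Ico (0 : ℝ) 1, ∀ x, update f s c x ∈ Set.Ico 0 1 :=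
    fun c hc => (forall_update_iff f fun _ b => b ∈ Set.Ico (0 : ℝ) 1).2 ⟨hc, fun x _ => hf x⟩
  have hpos : ∀ c ∈ Set.Ico (0 : ℝ) 1, 0 < pathSum w V (update f s c) e :=
    fun c hc => pathSum_pos hw (hupdate c hc) he
  have h₁ := hpos c₁ ⟨hc₁, hc.trans_lt hc₂⟩
  have h₂ := hpos c₂ ⟨hc₁.trans hc, hc₂⟩
  rw [pathSum_update s c₁] at h₁ ⊢
  rw [pathSum_update s c₂] at h₂ ⊢
  simp only [mul_assoc] at h₁ h₂ ⊢
  rw [visitProb, ← mul_div_assoc]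
  exact log_add_mul_sub_log_add_mul_le (hpos 0 ⟨le_rfl, one_pos⟩) hc₁ hc h₁ h₂

lemma visitProb_congr (s : κ) {e' : κ → ℝ}
    (h : ∀ x ∈ (Finset.univ.biUnion V).erase s, e x = e' x) :
    visitProb s w V f e = visitProb s w V f e' := by
  unfold visitProb pathSumThrough
  congr 1 <;> refine pathSum_congr fun x hx => ?_
  · simp only [Finset.mem_biUnion, Finset.mem_erase] at hx h
    obtain ⟨σ, -, hxs, hxσ⟩ := hx
    rw [h x ⟨hxs, σ, Finset.mem_univ σ, hxσ⟩]
  · rcases eq_or_ne x s with rfl | hxs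
    · simp
    · rw [h x (Finset.mem_erase.2 ⟨hxs, hx⟩)]

lemma measurable_visitProb (s : κ) : Measurable (visitProb s w V f) :=
  (measurable_pathSum (V := fun σ => (V σ).erase s)).div measurable_pathSum

variable {Ω : Type*} [MeasurableSpace Ω] {μ : Measure Ω} {X : κ → Ω → ℝ}

theorem integral_mul_eq_zero_of_iIndepFun (hX : iIndepFun X μ) (hmeas : ∀ x, Measurable (X x))
    {s : κ} (hmean : ∫ a, X s a ∂μ = 0) {T : Finset κ} (hsT : s ∉ T) {ψ : (κ → ℝ) → ℝ}
    (hψ : Measurable ψ) (hψT : ∀ e e' : κ → ℝ, (∀ x ∈ T, e x = e' x) → ψ e = ψ e') :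
    ∫ a, X s a * ψ (fun x => X x a) ∂μ = 0 := by
  let extend : (T → ℝ) → κ → ℝ := fun v x => if h : x ∈ T then v ⟨x, h⟩ else 0
  have hextend : Measurable extend := measurable_pi_lambda _ fun x => by
    by_cases h : x ∈ T <;> simp [extend, h, measurable_pi_apply]
  have hψX : ∀ a, ψ (fun x => X x a) = ψ (extend fun i : T => X i a) :=
    fun a => hψT _ _ fun x hx => by simp [extend, hx]
  have hindep : IndepFun (X s) (fun a => ψ (extend fun i : T => X i a)) μ := by
    have h := (hX.indepFun_finset {s} T (Finset.disjoint_singleton_left.2 hsT) hmeas).comp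
      (measurable_pi_apply ⟨s, Finset.mem_singleton_self s⟩) (hψ.comp hextend)
    exact h
  simp only [hψX]
  rw [hindep.integral_fun_mul_eq_mul_integral (hmeas s).aestronglyMeasurable
    (hψ.comp (hextend.comp (measurable_pi_lambda _ fun i => hmeas i))).aestronglyMeasurable,
    hmean, zero_mul]

lemma integrable_mul_visitProb (hw : ∀ σ, 0 ≤ w σ) (hf : ∀ x, f x ∈ Set.Ico 0 1)
    (hmeas : ∀ x, Measurable (X x)) (hlb : ∀ᵐ a ∂μ, ∀ x, -1 ≤ X x a) {s : κ}
    (hint : Integrable (X s) μ) :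
    Integrable (fun a => X s a * visitProb s w V f (fun x => X x a)) μ := by
  refine hint.abs.mono' ((hmeas s).mul ((measurable_visitProb s).comp
    (measurable_pi_lambda _ hmeas))).aestronglyMeasurable ?_
  filter_upwards [hlb] with a ha
  have hp := visitProb_mem_Icc (V := V) hw hf ha s
  rw [Real.norm_eq_abs, abs_mul, abs_of_nonneg hp.1]
  exact mul_le_of_le_one_right (abs_nonneg _) hp.2

theorem exists_log_pathSum_sub_le [Nonempty ι] (hX : iIndepFun X μ)
    (hmeas : ∀ x, Measurable (X x)) (hlb : ∀ᵐ a ∂μ, ∀ x, -1 ≤ X x a)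
    (hint : ∀ x, Integrable (X x) μ) (hmean : ∀ x, ∫ a, X x a ∂μ = 0) (hw : ∀ σ, 0 < w σ)
    {b₁ b₂ : ℝ} (hb₁ : 0 ≤ b₁) (hb : b₁ ≤ b₂) (hb₂ : b₂ < 1) (S : Finset κ) :
    ∃ g : Ω → ℝ, Integrable g μ ∧ ∫ a, g a ∂μ = 0 ∧ ∀ᵐ a ∂μ,
      Real.log (pathSum w V (fun _ => b₂) (fun x => X x a))
        - Real.log (pathSum w V (S.piecewise (fun _ => b₁) (fun _ => b₂)) (fun x => X x a))
        ≤ g a := by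
  induction S using Finset.induction_on with
  | empty => exact ⟨0, integrable_zero _ _ _, integral_zero _ _, by simp⟩
  | @insert s S hs ih =>
    obtain ⟨g, hg, hg0, hle⟩ := ih
    set f := S.piecewise (fun _ => b₁) (fun _ => b₂)
    have hf : ∀ x, f x ∈ Set.Ico 0 1 := fun x =>
      S.piecewise_cases (fun _ => b₁) (fun _ => b₂) (· ∈ Set.Ico (0 : ℝ) 1)
        ⟨hb₁, hb.trans_lt hb₂⟩ ⟨hb₁.trans hb, hb₂⟩
    have hfs : update f s b₂ = f := by
      rw [← S.piecewise_eq_of_notMem (fun _ => b₁) (fun _ => b₂) hs, update_eq_self]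
    have hincr := integrable_mul_visitProb (V := V) (fun σ => (hw σ).le) hf hmeas hlb (hint s)
    refine ⟨fun a => g a + (b₂ - b₁) * (X s a * visitProb s w V f (fun x => X x a)),
      hg.add (hincr.const_mul _), ?_, ?_⟩
    · rw [integral_add hg (hincr.const_mul _), integral_const_mul,
        integral_mul_eq_zero_of_iIndepFun hX hmeas (hmean s) (Finset.notMem_erase s _)
          (measurable_visitProb s) fun e e' => visitProb_congr s, hg0]
      ring
    · filter_upwards [hle, hlb] with a hga ha
      have hstep := log_pathSum_update_sub_le (V := V) hw hf ha s hb₁ hb hb₂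
      rw [hfs] at hstep
      rw [Finset.piecewise_insert]
      linarith

theorem integral_log_pathSum_le [Nonempty ι] (hX : iIndepFun X μ)
    (hmeas : ∀ x, Measurable (X x)) (hlb : ∀ᵐ a ∂μ, ∀ x, -1 ≤ X x a)
    (hint : ∀ x, Integrable (X x) μ) (hmean : ∀ x, ∫ a, X x a ∂μ = 0) (hw : ∀ σ, 0 < w σ)
    {b₁ b₂ : ℝ} (hb₁ : 0 ≤ b₁) (hb : b₁ ≤ b₂) (hb₂ : b₂ < 1)
    (hint₁ : Integrable (fun a => Real.log (pathSum w V (fun _ => b₁) (fun x => X x a))) μ)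
    (hint₂ : Integrable (fun a => Real.log (pathSum w V (fun _ => b₂) (fun x => X x a))) μ) :
    ∫ a, Real.log (pathSum w V (fun _ => b₂) (fun x => X x a)) ∂μ
      ≤ ∫ a, Real.log (pathSum w V (fun _ => b₁) (fun x => X x a)) ∂μ := by
  obtain ⟨g, hg, hg0, hle⟩ := exists_log_pathSum_sub_le (V := V) hX hmeas hlb hint hmean hw
    hb₁ hb hb₂ (Finset.univ.biUnion V)
  have hb₁_on_paths : ∀ e, pathSum w V ((Finset.univ.biUnion V).piecewise (fun _ => b₁)
      (fun _ => b₂)) e = pathSum w V (fun _ => b₁) e := fun e =>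
    pathSum_congr fun x hx => by rw [Finset.piecewise_eq_of_mem _ _ _ hx]
  simp only [hb₁_on_paths] at hle
  rw [← sub_nonpos, ← integral_sub hint₂ hint₁, ← hg0]
  exact integral_mono_ae (hint₂.sub hint₁) hg hle

lemma integrable_of_integrable_abs_rpow [IsFiniteMeasure μ] {g : Ω → ℝ}
    (hg : AEStronglyMeasurable g μ) {p : ℝ} (hp : 1 ≤ p)
    (h : Integrable (fun a => |g a| ^ p) μ) : Integrable g μ :=
  (integrable_norm_iff hg).1 <| by
    simpa using integrable_norm_rpow_of_le hg zero_le_one (zero_le_one.trans hp) hp h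

end Polymer

open Polymer in
lemma polymerZ_eq_pathSum {Ω : Type*} (d : ℕ) (β : ℝ) (η : ℕ → (Fin d → ℤ) → Ω → ℝ) (N : ℕ)
    (a : Ω) :
    polymerZ d β η N a = pathSum (fun _ => (1 / (2 * d) : ℝ) ^ N)
      (fun σ : Fin N → Fin d × Bool => (Finset.range N).image fun n => (n + 1, srwPos σ (n + 1)))
      (fun _ => β) (fun x => η x.1 x.2 a) := by
  rw [polymerZ, pathSum, Finset.mul_sum]
  refine Finset.sum_congr rfl fun σ _ => congrArg _ ?_
  rw [Finset.prod_image fun n _ n' _ h => by simpa using congrArg Prod.fst h]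

theorem polymer_finite_volume_free_energy_antitone_general
    {Ω : Type*} {m : MeasurableSpace Ω} {μ : Measure Ω} [IsProbabilityMeasure μ]
    (d : ℕ) (hd : 1 ≤ d)
    (η : ℕ → (Fin d → ℤ) → Ω → ℝ)
    (hmeas : ∀ n z, Measurable (η n z))
    (hindep : iIndepFun
      (fun p : ℕ × (Fin d → ℤ) => η p.1 p.2) μ)
    (hlb : ∀ n z, ∀ᵐ a ∂μ, -1 ≤ η n z a)
    (hmean : ∀ n z, ∫ a, η n z a ∂μ = 0)
    (q : ℝ) (hq0 : 0 < q)
    (hmom : ∀ n z, Integrable (fun a => |η n z a| ^ (1 + q)) μ)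
    (N : ℕ)
    (hlogint : ∀ β ∈ Set.Ioo (0:ℝ) 1,
      Integrable (fun a => Real.log (polymerZ d β η N a)) μ) :
    AntitoneOn (fun β : ℝ => (1 / N : ℝ) * ∫ a, Real.log (polymerZ d β η N a) ∂μ)
      (Set.Ioo 0 1) := by
  intro β₁ hβ₁ β₂ hβ₂ hβ
  have : Nonempty (Fin d) := ⟨⟨0, hd⟩⟩
  have hint : ∀ x : ℕ × (Fin d → ℤ), Integrable (η x.1 x.2) μ := fun x =>
    Polymer.integrable_of_integrable_abs_rpow (hmeas x.1 x.2).aestronglyMeasurable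
      (by linarith) (hmom x.1 x.2)
  simp only [polymerZ_eq_pathSum] at hlogint ⊢
  refine mul_le_mul_of_nonneg_left ?_ (by positivity)
  exact Polymer.integral_log_pathSum_le hindep (fun x => hmeas x.1 x.2)
    (ae_all_iff.2 fun x => hlb x.1 x.2) hint (fun x => hmean x.1 x.2) (fun _ => by positivity)
    hβ₁.1.le hβ hβ₂.2 (hlogint β₁ hβ₁) (hlogint β₂ hβ₂)

/-- Monotonicity of the finite-volume free energy
`p_N(β) = (1/N) E[log Z_N^{β,ω}]` in `β` on `(0,1)`. -/
theorem polymer_finite_volume_free_energy_antitone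
    {Ω : Type*} {m : MeasurableSpace Ω} {μ : Measure Ω} [IsProbabilityMeasure μ]
    (d : ℕ) (hd : 1 ≤ d)
    (η : ℕ → (Fin d → ℤ) → Ω → ℝ)
    (hmeas : ∀ n z, Measurable (η n z))
    (hindep : iIndepFun
      (fun p : ℕ × (Fin d → ℤ) => η p.1 p.2) μ)
    (hident : ∀ n z, IdentDistrib (η n z) (η 0 0) μ μ)
    (hlb : ∀ n z, ∀ᵐ a ∂μ, -1 ≤ η n z a)
    (hmean : ∀ n z, ∫ a, η n z a ∂μ = 0)
    (q : ℝ) (hq0 : 0 < q) (hq1 : q < 1)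
    (hmom : ∀ n z, Integrable (fun a => |η n z a| ^ (1 + q)) μ)
    (N : ℕ) (hN : 1 ≤ N)
    (hlogint : ∀ β ∈ Set.Ioo (0:ℝ) 1,
      Integrable (fun a => Real.log (polymerZ d β η N a)) μ) :
    AntitoneOn (fun β : ℝ => (1 / N : ℝ) * ∫ a, Real.log (polymerZ d β η N a) ∂μ)
      (Set.Ioo 0 1) :=
  polymer_finite_volume_free_energy_antitone_general (m := m) d hd η hmeas hindep hlb hmean q hq0
    hmom N hlogint
end
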